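/- There exists a countable poset P in which every element lies below some maximal element, such that the equivalence relations ∼ₙ (n ∈ ℕ) on P are pairwise distinct; equivalently, for every n ∈ ℕ there exist x, y ∈ P with x ∼ₙ y but ¬(x ∼ₙ₊₁ y). -/
import Mathlib


/-- The set of maximal elements above `x`, w.r.t. an explicit order relation. -/
def MsetR {P : Type*} (le : P → P → Prop) (x : P) : Set P :=
  {m | le x m ∧ ∀ y, le m y → y = m}

/-- The bounded bisimulation relations `∼ₙ`, w.r.t. an explicit order relation. -/
def simR {P : Type*} (le : P → P → Prop) : ℕ → P → P → Prop
  | 0, x, y => MsetR le x = MsetR le y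
  | n + 1, x, y =>
      (∀ z, le x z → ∃ w, le y w ∧ simR le n z w) ∧
      (∀ w, le y w → ∃ z, le x z ∧ simR le n z w)

/-! ### Auxiliary development -/

namespace Stmt13Aux

/-- The carrier of our countable poset: three maximal elements `M0 M1 M2`, two auxiliary
elements `G`, `H`, and a ladder `T k`. -/
inductive PP : Type
  | M0 | M1 | M2 | G | H | T (k : ℕ)
  deriving DecidableEq

open PP

/-- The order relation. -/
def pple : PP → PP → Prop
  | M0, b => b = M0
  | M1, b => b = M1
  | M2, b => b = M2
  | G, b => b = G ∨ b = M1
  | H, b => b = H ∨ b = G ∨ b = M1 ∨ b = M2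
  | T _, M0 => True
  | T _, M1 => True
  | T _, M2 => True
  | T _, G => True
  | T k, H => 1 ≤ k
  | T k, T j => j = k ∨ j + 2 ≤ k

instance instPO : PartialOrder PP where
  le := pple
  le_refl a := by cases a <;> simp [pple]
  le_trans a b c hab hbc := by
    cases a <;> cases b <;> cases c <;> simp_all [pple] <;> omega
  le_antisymm a b hab hba := by
    cases a <;> cases b <;> simp_all [pple] <;> omega

/-- Coding of `PP` into `ℕ`. -/
def code : PP → ℕ
  | M0 => 0 | M1 => 1 | M2 => 2 | G => 3 | H => 4 | T k => k + 5

lemma code_inj : Function.Injective code := by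
  intro a b hab
  cases a <;> cases b <;> simp_all [code]

instance : Countable PP := code_inj.countable

/-- the target equivalence classes: at level `n` the classes are `{M0}`, `{M1, G}`, `{M2}`,
`{H}`, singletons `{T j}` for `j < n`, and `{T j : n ≤ j}`. -/
def Sim (n : ℕ) (a b : PP) : Prop :=
  a = b ∨ (a = G ∧ b = M1) ∨ (a = M1 ∧ b = G) ∨
    ∃ i j, a = T i ∧ b = T j ∧ n ≤ i ∧ n ≤ j

lemma simR_refl {Q : Type*} (le : Q → Q → Prop) : ∀ n x, simR le n x x
  | 0, _ => rfl
  | n + 1, x =>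
      ⟨fun z hz => ⟨z, hz, simR_refl le n z⟩, fun w hw => ⟨w, hw, simR_refl le n w⟩⟩

lemma simR_symm {Q : Type*} (le : Q → Q → Prop) :
    ∀ n x y, simR le n x y → simR le n y x
  | 0, _, _, h => h.symm
  | n + 1, _, _, h =>
      ⟨fun z hz => let ⟨w, hw, hs⟩ := h.2 z hz; ⟨w, hw, simR_symm le n _ _ hs⟩,
       fun w hw => let ⟨z, hz, hs⟩ := h.1 w hw; ⟨z, hz, simR_symm le n _ _ hs⟩⟩

lemma simR_mono {Q : Type*} (le : Q → Q → Prop) (hrefl : ∀ x, le x x)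
    (htrans : ∀ {a b c}, le a b → le b c → le a c) :
    ∀ n x y, simR le (n + 1) x y → simR le n x y
  | 0, x, y, h => by
      apply Set.eq_of_subset_of_subset
      · intro z hz
        obtain ⟨w, hw, h0⟩ := h.1 z hz.1
        have hzz : z ∈ MsetR le z := ⟨hrefl z, hz.2⟩
        rw [h0] at hzz
        exact ⟨htrans hw hzz.1, hz.2⟩
      · intro z hz
        obtain ⟨w, hw, h0⟩ := h.2 z hz.1
        have hzz : z ∈ MsetR le z := ⟨hrefl z, hz.2⟩
        rw [← h0] at hzz
        exact ⟨htrans hw hzz.1, hz.2⟩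
  | n + 1, x, y, h =>
      ⟨fun z hz => let ⟨w, hw, hs⟩ := h.1 z hz; ⟨w, hw, simR_mono le hrefl htrans n z w hs⟩,
       fun w hw => let ⟨z, hz, hs⟩ := h.2 w hw; ⟨z, hz, simR_mono le hrefl htrans n z w hs⟩⟩

lemma pple_refl (x : PP) : pple x x := instPO.le_refl x

lemma pple_trans {a b c : PP} (h1 : pple a b) (h2 : pple b c) : pple a c :=
  instPO.le_trans a b c h1 h2

lemma simR_zero_of {n : ℕ} {x y : PP} (h : simR pple n x y) : simR pple 0 x y := by
  induction n with
  | zero => exact h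
  | succ n ih => exact ih (simR_mono pple pple_refl (fun h1 h2 => pple_trans h1 h2) n x y h)

lemma max_iff (x : PP) : (∀ y, pple x y → y = x) ↔ (x = M0 ∨ x = M1 ∨ x = M2) := by
  constructor
  · intro hx
    cases x with
    | M0 => exact Or.inl rfl
    | M1 => exact Or.inr (Or.inl rfl)
    | M2 => exact Or.inr (Or.inr rfl)
    | G => exact absurd (hx M1 (Or.inr rfl)) (by simp)
    | H => exact absurd (hx M1 (by simp [pple])) (by simp)
    | T k => exact absurd (hx M0 trivial) (by simp)
  · rintro (rfl | rfl | rfl) y hy <;> exact hy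

lemma mem_Mset (a x : PP) :
    x ∈ MsetR pple a ↔ pple a x ∧ (x = M0 ∨ x = M1 ∨ x = M2) := by
  unfold MsetR
  simp only [Set.mem_setOf_eq, max_iff]

lemma Mset_eq_iff (a b : PP) :
    MsetR pple a = MsetR pple b ↔
      ((pple a M0 ↔ pple b M0) ∧ (pple a M1 ↔ pple b M1) ∧ (pple a M2 ↔ pple b M2)) := by
  constructor
  · intro hEq
    have key : ∀ x, (x = M0 ∨ x = M1 ∨ x = M2) → (pple a x ↔ pple b x) := by
      intro x hx
      constructor
      · intro hp
        have hmem : x ∈ MsetR pple a := (mem_Mset a x).mpr ⟨hp, hx⟩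
        rw [hEq] at hmem
        exact ((mem_Mset b x).mp hmem).1
      · intro hp
        have hmem : x ∈ MsetR pple b := (mem_Mset b x).mpr ⟨hp, hx⟩
        rw [← hEq] at hmem
        exact ((mem_Mset a x).mp hmem).1
    exact ⟨key M0 (Or.inl rfl), key M1 (Or.inr (Or.inl rfl)), key M2 (Or.inr (Or.inr rfl))⟩
  · rintro ⟨h0, h1, h2⟩
    ext x
    rw [mem_Mset, mem_Mset]
    constructor <;> rintro ⟨hp, hD⟩ <;> refine ⟨?_, hD⟩ <;>
      rcases hD with rfl | rfl | rfl <;> tauto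

lemma sim0_iff (a b : PP) : simR pple 0 a b ↔ Sim 0 a b := by
  show MsetR pple a = MsetR pple b ↔ Sim 0 a b
  rw [Mset_eq_iff]
  cases a <;> cases b <;> simp [pple, Sim]

lemma simR_iff_Sim : ∀ n (a b : PP), simR pple n a b ↔ Sim n a b := by
  intro n
  induction n with
  | zero => exact sim0_iff
  | succ n ih =>
    -- key lemma: if `i < j` and `T i ∼_{n+1} T j` then `n + 1 ≤ i`.
    have key : ∀ i j : ℕ, i < j → simR pple (n + 1) (T i) (T j) → n + 1 ≤ i := by
      intro i j hij hsim
      obtain ⟨_, bwd⟩ := hsim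
      cases i with
      | zero =>
        exfalso
        obtain ⟨z, hz, hzw⟩ := bwd H (show pple (T j) H by simp [pple]; omega)
        have hS : Sim n z H := (ih z H).mp hzw
        rcases hS with rfl | ⟨rfl, hb⟩ | ⟨rfl, hb⟩ | ⟨i', j', rfl, hb, _, _⟩
        · exact absurd hz (by simp [pple])
        · exact absurd hb (by simp)
        · exact absurd hb (by simp)
        · exact absurd hb (by simp)
      | succ k =>
        obtain ⟨z, hz, hzw⟩ := bwd (T k) (show pple (T j) (T k) by right; omega)
        have hS : Sim n z (T k) := (ih z (T k)).mp hzw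
        rcases hS with rfl | ⟨rfl, hb⟩ | ⟨rfl, hb⟩ | ⟨i', j', rfl, hb, hni', hnj'⟩
        · rcases hz with h | h <;> omega
        · exact absurd hb (by simp)
        · exact absurd hb (by simp)
        · have : j' = k := by injection hb.symm
          omega
    -- construction: if `n+1 ≤ i` and `n+1 ≤ j` then the forward clause holds.
    have build : ∀ i j : ℕ, n + 1 ≤ i → n + 1 ≤ j →
        ∀ z, pple (T i) z → ∃ w, pple (T j) w ∧ simR pple n z w := by
      intro i j hi hj z hz
      cases z with
      | M0 => exact ⟨M0, trivial, simR_refl pple n M0⟩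
      | M1 => exact ⟨M1, trivial, simR_refl pple n M1⟩
      | M2 => exact ⟨M2, trivial, simR_refl pple n M2⟩
      | G => exact ⟨G, trivial, simR_refl pple n G⟩
      | H => exact ⟨H, by show 1 ≤ j; omega, simR_refl pple n H⟩
      | T k =>
        by_cases hkj : k + 2 ≤ j
        · exact ⟨T k, Or.inr hkj, simR_refl pple n (T k)⟩
        · refine ⟨T j, Or.inl rfl, (ih (T k) (T j)).mpr ?_⟩
          rcases hz with h | h
          · exact Or.inr (Or.inr (Or.inr ⟨k, j, rfl, rfl, by omega, by omega⟩))
          · exact Or.inr (Or.inr (Or.inr ⟨k, j, rfl, rfl, by omega, by omega⟩))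
    -- `G ∼ₙ M1` at every level
    have gm1 : ∀ m, simR pple m G M1 := by
      intro m
      induction m with
      | zero =>
        rw [sim0_iff]
        exact Or.inr (Or.inl ⟨rfl, rfl⟩)
      | succ m ihm =>
        constructor
        · rintro z (rfl | rfl)
          · exact ⟨M1, rfl, ihm⟩
          · exact ⟨M1, rfl, simR_refl pple m M1⟩
        · rintro w rfl
          exact ⟨M1, Or.inr rfl, simR_refl pple m M1⟩
    intro a b
    constructor
    · intro hs
      have h0 : Sim 0 a b := (sim0_iff a b).mp (simR_zero_of hs)
      rcases h0 with rfl | ⟨rfl, rfl⟩ | ⟨rfl, rfl⟩ | ⟨i, j, rfl, rfl, _, _⟩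
      · exact Or.inl rfl
      · exact Or.inr (Or.inl ⟨rfl, rfl⟩)
      · exact Or.inr (Or.inr (Or.inl ⟨rfl, rfl⟩))
      · rcases lt_trichotomy i j with hij | rfl | hij
        · have hi := key i j hij hs
          exact Or.inr (Or.inr (Or.inr ⟨i, j, rfl, rfl, hi, by omega⟩))
        · exact Or.inl rfl
        · have hj := key j i hij (simR_symm pple (n + 1) _ _ hs)
          exact Or.inr (Or.inr (Or.inr ⟨i, j, rfl, rfl, by omega, hj⟩))
    · rintro (rfl | ⟨rfl, rfl⟩ | ⟨rfl, rfl⟩ | ⟨i, j, rfl, rfl, hi, hj⟩)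
      · exact simR_refl pple (n + 1) a
      · exact gm1 (n + 1)
      · exact simR_symm pple (n + 1) _ _ (gm1 (n + 1))
      · exact ⟨build i j hi hj, fun w hw =>
          let ⟨z, hz, hszw⟩ := build j i hj hi w hw
          ⟨z, hz, simR_symm pple n _ _ hszw⟩⟩

end Stmt13Aux

/-- there is a countable poset in which every element lies below a
maximal element and such that for every `n` the relations `∼ₙ` and `∼ₙ₊₁` are
distinct: some `x, y` satisfy `x ∼ₙ y` but not `x ∼ₙ₊₁ y`. -/
theorem stmt13 :
    ∃ (P : Type) (po : PartialOrder P), Countable P ∧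
      (∀ x : P, ∃ m : P, po.le x m ∧ ∀ y : P, po.le m y → y = m) ∧
      (∀ n : ℕ, ∃ x y : P, simR po.le n x y ∧ ¬simR po.le (n + 1) x y) := by
  classical
  refine ⟨Stmt13Aux.PP, Stmt13Aux.instPO, inferInstance, ?_, ?_⟩
  · intro x
    have hm1 : ∀ y, Stmt13Aux.pple Stmt13Aux.PP.M1 y → y = Stmt13Aux.PP.M1 := fun y hy => hy
    cases x with
    | M0 => exact ⟨Stmt13Aux.PP.M0, rfl, fun y hy => hy⟩
    | M1 => exact ⟨Stmt13Aux.PP.M1, rfl, hm1⟩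
    | M2 => exact ⟨Stmt13Aux.PP.M2, rfl, fun y hy => hy⟩
    | G => exact ⟨Stmt13Aux.PP.M1, Or.inr rfl, hm1⟩
    | H => exact ⟨Stmt13Aux.PP.M1, Or.inr (Or.inr (Or.inl rfl)), hm1⟩
    | T k => exact ⟨Stmt13Aux.PP.M1, trivial, hm1⟩
  · intro n
    refine ⟨Stmt13Aux.PP.T n, Stmt13Aux.PP.T (n + 1), ?_, ?_⟩
    · exact (Stmt13Aux.simR_iff_Sim n _ _).mpr
        (Or.inr (Or.inr (Or.inr ⟨n, n + 1, rfl, rfl, le_refl n, by omega⟩)))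
    · intro hcon
      have hS := (Stmt13Aux.simR_iff_Sim (n + 1) _ _).mp hcon
      rcases hS with heq | ⟨ha, _⟩ | ⟨ha, _⟩ | ⟨i, j, ha, hb, hi, hj⟩
      · have : n = n + 1 := by injection heq
        omega
      · exact absurd ha (by simp)
      · exact absurd ha (by simp)
      · have hni : i = n := by injection ha.symm
        omega
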